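/- Let S' = Σ3(T/I)(0,4,7) be the set of all 144 reorderings of all transposed and inverted forms of (0,4,7) in (ℤ/12ℤ)³, and define RICH : S' → S' by RICH(y1,y2,y3) = (y2, y3, y2 + y3 − y1) (that is, RICH = (1 3) ∘ J^{2,3} where J^{2,3}(Y) = I_{y2+y3}(Y)). Then RICH maps S' to S', the power RICH⁶ has a fixed point in S' but RICH⁶ is not the identity on S', and the power RICH⁸ has a fixed point in S' but RICH⁸ is not the identity on S'. Consequently, no subgroup of Sym(S') containing RICH acts simply transitively on S'. -/

import Mathlib

/-- The coordinate-permuting action of `Σ3` on triples in `ℤ/12ℤ`. -/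
def pact (σ : Equiv.Perm (Fin 3)) (y : Fin 3 → ZMod 12) : Fin 3 → ZMod 12 :=
  fun i => y (σ⁻¹ i)

/-- The set of the 24 consonant-triad pitch-class segments in root-position ordering:
all componentwise transpositions `T_j(0,4,7)` and inversions `I_j(0,4,7)`. -/
def consSet : Set (Fin 3 → ZMod 12) :=
  {Y | (∃ j : ZMod 12, Y = fun i => ![0, 4, 7] i + j) ∨
       (∃ j : ZMod 12, Y = fun i => -(![0, 4, 7] i) + j)}

/-- The set `S' = Σ3(T/I)(0,4,7)` of all 144 reorderings of all transposed and inverted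
forms of `(0,4,7)`. -/
def orderedTriads : Set (Fin 3 → ZMod 12) :=
  {Y | ∃ σ : Equiv.Perm (Fin 3), ∃ Z ∈ consSet, pact σ Z = Y}

/-- The retrograde-inversion-enchaining map
`RICH(y1, y2, y3) = (y2, y3, y2 + y3 - y1)`, i.e. `RICH = (1 3) ∘ J^{2,3}`. -/
def rich (y : Fin 3 → ZMod 12) : Fin 3 → ZMod 12 :=
  ![y 1, y 2, y 1 + y 2 - y 0]

/-!
`RICH` is the coordinate swap `(1 3)` composed with the contextual inversion `J^{2,3}`, which
applies to `Y` the inversion `I_{y2+y3}`; both preserve `S'`, since the `T/I`-action commutes with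
the `Σ3`-action. On `S'` its orbits through `(0,4,7)`, `(0,7,4)` and `(6,11,3)` have lengths 24, 6
and 8, so `RICH⁶` and `RICH⁸` have fixed points without being the identity. In a simply transitive
group only the identity has a fixed point.
-/

lemma pact_mul (σ τ : Equiv.Perm (Fin 3)) (y : Fin 3 → ZMod 12) :
    pact σ (pact τ y) = pact (σ * τ) y := by
  ext i
  simp [pact, mul_inv_rev]

lemma pact_mem_orderedTriads (σ : Equiv.Perm (Fin 3)) {Y : Fin 3 → ZMod 12}
    (hY : Y ∈ orderedTriads) : pact σ Y ∈ orderedTriads := by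
  obtain ⟨τ, Z, hZ, rfl⟩ := hY
  exact ⟨σ * τ, Z, hZ, (pact_mul σ τ Z).symm⟩

lemma inversion_mem_consSet (k : ZMod 12) {Y : Fin 3 → ZMod 12} (hY : Y ∈ consSet) :
    (fun i => -Y i + k) ∈ consSet := by
  rcases hY with ⟨j, rfl⟩ | ⟨j, rfl⟩
  · exact Or.inr ⟨k - j, funext fun i => by ring⟩
  · exact Or.inl ⟨k - j, funext fun i => by ring⟩

lemma inversion_mem_orderedTriads (k : ZMod 12) {Y : Fin 3 → ZMod 12}
    (hY : Y ∈ orderedTriads) : (fun i => -Y i + k) ∈ orderedTriads := by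
  obtain ⟨σ, Z, hZ, rfl⟩ := hY
  exact ⟨σ, _, inversion_mem_consSet k hZ, rfl⟩

lemma rich_eq_pact_swap_inversion (Y : Fin 3 → ZMod 12) :
    rich Y = pact (Equiv.swap 0 2) (fun i => -Y i + (Y 1 + Y 2)) := by
  ext i
  fin_cases i <;> simp [rich, pact, Equiv.swap_apply_of_ne_of_ne, sub_eq_neg_add, add_comm]

lemma rich_mem_orderedTriads {Y : Fin 3 → ZMod 12} (hY : Y ∈ orderedTriads) :
    rich Y ∈ orderedTriads := by
  rw [rich_eq_pact_swap_inversion]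
  exact pact_mem_orderedTriads _ (inversion_mem_orderedTriads _ hY)

section Lift

variable {α : Type*} {s : Set α} {f : α → α} {e : Equiv.Perm s}

lemma coe_pow_apply_eq_iterate (he : ∀ y : s, (e y : α) = f y) (n : ℕ) (y : s) :
    ((e ^ n) y : α) = f^[n] y := by
  induction n with
  | zero => rfl
  | succ n ih => rw [pow_succ', Equiv.Perm.mul_apply, he, ih, Function.iterate_succ_apply']

lemma pow_apply_eq_self_iff (he : ∀ y : s, (e y : α) = f y) (n : ℕ) (y : s) :
    (e ^ n) y = y ↔ f^[n] y = y := by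
  rw [Subtype.ext_iff, coe_pow_apply_eq_iterate he]

lemma pow_ne_one_of_iterate_ne (he : ∀ y : s, (e y : α) = f y) {n : ℕ} (y : s)
    (hy : f^[n] y ≠ y) : e ^ n ≠ 1 := fun h =>
  hy <| (pow_apply_eq_self_iff he n y).1 (by rw [h, Equiv.Perm.one_apply])

end Lift

lemma Subgroup.eq_one_of_apply_eq_self_of_existsUnique {α : Type*}
    {H : Subgroup (Equiv.Perm α)}
    (hH : ∀ y z : α, ∃! p : Equiv.Perm α, p ∈ H ∧ p y = z)
    {g : Equiv.Perm α} (hg : g ∈ H) {y : α} (hy : g y = y) : g = 1 :=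
  (hH y y).unique ⟨hg, hy⟩ ⟨one_mem H, rfl⟩

lemma mem_orderedTriads_0_4_7 : ![0, 4, 7] ∈ orderedTriads :=
  ⟨1, _, Or.inl ⟨0, rfl⟩, by decide⟩

lemma rich_iterate_six_0_4_7_ne : rich^[6] ![0, 4, 7] ≠ ![0, 4, 7] := by decide

lemma mem_orderedTriads_0_7_4 : ![0, 7, 4] ∈ orderedTriads :=
  ⟨Equiv.swap 1 2, _, Or.inl ⟨0, rfl⟩, by decide⟩

lemma rich_iterate_six_0_7_4 : rich^[6] ![0, 7, 4] = ![0, 7, 4] := by decide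

lemma rich_iterate_eight_0_7_4_ne : rich^[8] ![0, 7, 4] ≠ ![0, 7, 4] := by decide

lemma mem_orderedTriads_6_11_3 : ![6, 11, 3] ∈ orderedTriads :=
  ⟨Equiv.swap 0 2 * Equiv.swap 0 1, _, Or.inl ⟨11, rfl⟩, by decide⟩

lemma rich_iterate_eight_6_11_3 : rich^[8] ![6, 11, 3] = ![6, 11, 3] := by decide

/-- `RICH` maps `S' = Σ3(T/I)(0,4,7)` to itself; `RICH⁶` has a fixed point
in `S'` but is not the identity on `S'`; `RICH⁸` has a fixed point in `S'` but is not the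
identity on `S'`; consequently no subgroup of `Sym(S')` containing `RICH` acts simply
transitively on `S'`. -/
theorem stmt19 :
    (∀ Y ∈ orderedTriads, rich Y ∈ orderedTriads) ∧
    (∀ RICH : Equiv.Perm ↥orderedTriads,
      (∀ Y : ↥orderedTriads, (RICH Y : Fin 3 → ZMod 12) = rich (Y : Fin 3 → ZMod 12)) →
        ((∃ Y : ↥orderedTriads, (RICH ^ 6) Y = Y) ∧ RICH ^ 6 ≠ 1 ∧
         (∃ Y : ↥orderedTriads, (RICH ^ 8) Y = Y) ∧ RICH ^ 8 ≠ 1 ∧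
         (∀ H : Subgroup (Equiv.Perm ↥orderedTriads), RICH ∈ H →
            ¬ (∀ Y Z : ↥orderedTriads, ∃! p : Equiv.Perm ↥orderedTriads,
                  p ∈ H ∧ p Y = Z)))) := by
  refine ⟨fun Y hY => rich_mem_orderedTriads hY, fun RICH h => ?_⟩
  let Y₀ : orderedTriads := ⟨_, mem_orderedTriads_0_4_7⟩
  let Y₆ : orderedTriads := ⟨_, mem_orderedTriads_0_7_4⟩
  let Y₈ : orderedTriads := ⟨_, mem_orderedTriads_6_11_3⟩
  have fix₆ : (RICH ^ 6) Y₆ = Y₆ := (pow_apply_eq_self_iff h 6 Y₆).2 rich_iterate_six_0_7_4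
  have fix₈ : (RICH ^ 8) Y₈ = Y₈ := (pow_apply_eq_self_iff h 8 Y₈).2 rich_iterate_eight_6_11_3
  have ne₆ : RICH ^ 6 ≠ 1 := pow_ne_one_of_iterate_ne h Y₀ rich_iterate_six_0_4_7_ne
  have ne₈ : RICH ^ 8 ≠ 1 := pow_ne_one_of_iterate_ne h Y₆ rich_iterate_eight_0_7_4_ne
  refine ⟨⟨Y₆, fix₆⟩, ne₆, ⟨Y₈, fix₈⟩, ne₈, fun H hRICH hH => ?_⟩
  exact ne₆ (Subgroup.eq_one_of_apply_eq_self_of_existsUnique hH (pow_mem hRICH 6) fix₆)
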